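/- arXiv:2505.13265 — 2 statements merged into one kernel-verified Lean document; each statement's English description precedes it below -/
import Mathlib

section
/- Let (A, ρ) be a unital C*-probability space with ρ faithful, and let (V_n)_{n≥0} be a filtration of A. Then (V_n) has the rapid decay property if and only if there exist constants c, α > 0 such that ‖a·b‖₂ ≤ c (n+1)^α ‖a‖₂ ‖b‖₂ for every n, every a ∈ V_n, and every b ∈ ⋃_k V_k. -/
open scoped ComplexOrder

section Defs

variable {A : Type*} [NormedRing A] [StarRing A] [Module ℂ A]

/-- A state on a unital complex `*`-algebra: a unital positive linear functional. -/
structure IsState (ρ : A →ₗ[ℂ] ℂ) : Prop where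
  map_one : ρ 1 = 1
  nonneg : ∀ a : A, 0 ≤ ρ (star a * a)

/-- The `L²`-seminorm `‖a‖₂ = (ρ(a* a))^{1/2}` associated to a state `ρ`. -/
noncomputable def norm2 (ρ : A →ₗ[ℂ] ℂ) (a : A) : ℝ :=
  Real.sqrt (ρ (star a * a)).re

/-- A filtration of a unital complex `*`-algebra: an increasing sequence of subspaces with
`V 0 = ℂ·1`, stable under adjoints, submultiplicative, and with dense union. -/
structure IsAlgFiltration (V : ℕ → Submodule ℂ A) : Prop where
  zero_eq : V 0 = Submodule.span ℂ ({1} : Set A)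
  mono : Monotone V
  star_mem : ∀ n : ℕ, ∀ a ∈ V n, star a ∈ V n
  mul_mem : ∀ m n : ℕ, ∀ a ∈ V m, ∀ b ∈ V n, a * b ∈ V (m + n)
  dense : Dense (⋃ n : ℕ, (V n : Set A))

/-- The rapid decay inequality with explicit constants `c` and `α`:
`‖a‖ ≤ c (n+1)^α ‖a‖₂` for all `a ∈ V n`. -/
def HasRapidDecayWith (ρ : A →ₗ[ℂ] ℂ) (V : ℕ → Submodule ℂ A) (c α : ℝ) : Prop :=
  ∀ n : ℕ, ∀ a ∈ V n, ‖a‖ ≤ c * ((n : ℝ) + 1) ^ α * norm2 ρ a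

/-- The rapid decay property of a filtration. -/
def HasRapidDecay (ρ : A →ₗ[ℂ] ℂ) (V : ℕ → Submodule ℂ A) : Prop :=
  ∃ c > 0, ∃ α > 0, HasRapidDecayWith ρ V c α

end Defs

section Aux

variable {A : Type*} [NormedRing A] [StarRing A] [CStarRing A] [CompleteSpace A]
    [NormedAlgebra ℂ A] [StarModule ℂ A]

lemma isState_re_nonneg (ρ : A →ₗ[ℂ] ℂ) (hρ : IsState ρ) (a : A) :
    0 ≤ (ρ (star a * a)).re :=
  (Complex.le_def.mp (hρ.nonneg a)).1

lemma norm2_nonneg' (ρ : A →ₗ[ℂ] ℂ) (a : A) : 0 ≤ norm2 ρ a := Real.sqrt_nonneg _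

lemma norm2_sq (ρ : A →ₗ[ℂ] ℂ) (hρ : IsState ρ) (a : A) :
    norm2 ρ a ^ 2 = (ρ (star a * a)).re :=
  Real.sq_sqrt (isState_re_nonneg ρ hρ a)

lemma norm2_zero (ρ : A →ₗ[ℂ] ℂ) : norm2 ρ 0 = 0 := by simp [norm2]

lemma eq_zero_of_norm2_eq_zero (ρ : A →ₗ[ℂ] ℂ) (hρ : IsState ρ)
    (hfaith : ∀ a : A, ρ (star a * a) = 0 → a = 0) {a : A} (h : norm2 ρ a = 0) : a = 0 := by
  apply hfaith
  have h1 : (ρ (star a * a)).re = 0 := by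
    have h2 := norm2_sq ρ hρ a
    rw [h] at h2
    simpa using h2.symm
  have h2 : (ρ (star a * a)).im = 0 := by
    simpa using ((Complex.le_def.mp (hρ.nonneg a)).2).symm
  exact Complex.ext (by simpa using h1) (by simpa using h2)

section Order

variable [PartialOrder A] [StarOrderedRing A]

lemma rho_re_mono (ρ : A →ₗ[ℂ] ℂ) (hρ : IsState ρ) {x y : A} (h : x ≤ y) :
    (ρ x).re ≤ (ρ y).re := by
  rw [StarOrderedRing.le_iff] at h
  obtain ⟨p, hp, rfl⟩ := h
  have h0 : 0 ≤ (ρ p).re := by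
    induction hp using AddSubmonoid.closure_induction with
    | mem s hs => obtain ⟨t, rfl⟩ := hs; exact isState_re_nonneg ρ hρ t
    | zero => simp
    | add u v _ _ hu hv => rw [map_add]; simpa using add_nonneg hu hv
  rw [map_add]
  simp only [Complex.add_re]
  linarith

end Order

lemma rho_smul_re (ρ : A →ₗ[ℂ] ℂ) (r : ℝ) (x : A) : (ρ (r • x)).re = r * (ρ x).re := by
  rw [LinearMap.map_smul_of_tower]
  simp [Complex.smul_re]

lemma norm2_mul_le (ρ : A →ₗ[ℂ] ℂ) (hρ : IsState ρ) (a b : A) :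
    norm2 ρ (a * b) ≤ ‖a‖ * norm2 ρ b := by
  letI : CStarAlgebra A := {}
  letI : PartialOrder A := CStarAlgebra.spectralOrder A
  letI : StarOrderedRing A := CStarAlgebra.spectralOrderedRing A
  have hconj : star (a * b) * (a * b) ≤ ‖star a * a‖ • (star b * b) := by
    have h := CStarAlgebra.star_left_conjugate_le_norm_smul (a := b) (b := star a * a)
      (IsSelfAdjoint.star_mul_self a)
    have heq : star (a * b) * (a * b) = star b * (star a * a) * b := by
      rw [star_mul]; noncomm_ring
    rwa [heq]
  have h1 : (ρ (star (a * b) * (a * b))).re ≤ ‖star a * a‖ * (ρ (star b * b)).re := by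
    have h2 := rho_re_mono ρ hρ hconj
    rwa [rho_smul_re] at h2
  have h2 : ‖star a * a‖ = ‖a‖ ^ 2 := by rw [CStarRing.norm_star_mul_self]; ring
  calc norm2 ρ (a * b) = Real.sqrt ((ρ (star (a * b) * (a * b))).re) := rfl
    _ ≤ Real.sqrt (‖a‖ ^ 2 * (ρ (star b * b)).re) := Real.sqrt_le_sqrt (by rw [← h2]; exact h1)
    _ = ‖a‖ * norm2 ρ b := by
        rw [Real.sqrt_mul (by positivity), Real.sqrt_sq (norm_nonneg a)]; rfl

lemma norm_star_mul_self_le_of_pow (ρ : A →ₗ[ℂ] ℂ) (hρ : IsState ρ)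
    (hfaith : ∀ x : A, ρ (star x * x) = 0 → x = 0) (a : A) {C : ℝ} (hC : 0 < C)
    (hpow : ∀ m : ℕ, norm2 ρ ((star a * a) ^ (m + 1)) ≤ C ^ m * norm2 ρ (star a * a) ^ (m + 1)) :
    ‖star a * a‖ ≤ C * norm2 ρ (star a * a) := by
  letI : CStarAlgebra A := {}
  letI : PartialOrder A := CStarAlgebra.spectralOrder A
  letI : StarOrderedRing A := CStarAlgebra.spectralOrderedRing A
  have hone : (1 : A) ≠ 0 := by
    intro h
    have h2 := hρ.map_one
    rw [h, map_zero] at h2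
    exact zero_ne_one h2
  have : Nontrivial A := nontrivial_of_ne 1 0 hone
  set y := star a * a with hy_def
  by_cases hy0 : y = 0
  · rw [hy0]
    simp [norm2_zero]
  have hN : 0 < ‖y‖ := norm_pos_iff.mpr hy0
  have hK0 : 0 < norm2 ρ y := by
    rcases lt_or_eq_of_le (norm2_nonneg' ρ y) with h | h
    · exact h
    · exact absurd (eq_zero_of_norm2_eq_zero ρ hρ hfaith h.symm) hy0
  have hy_nonneg : (0 : A) ≤ y := star_mul_self_nonneg a
  have hysa : IsSelfAdjoint y := IsSelfAdjoint.star_mul_self a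
  set N := ‖y‖ with hNdef
  set K := norm2 ρ y with hKdef
  have hmain : ∀ ε : ℝ, 0 < ε → ε < N → N - ε ≤ C * K := by
    intro ε hε hεN
    have hg_cont : Continuous (fun t : ℝ => max 0 (min 1 ((t - (N - ε)) / ε))) := by fun_prop
    set g : ℝ → ℝ := fun t => max 0 (min 1 ((t - (N - ε)) / ε)) with hg_def
    set f := cfc g y with hf_def
    have hfsa : IsSelfAdjoint f := cfc_predicate g y
    have hgN : g N = 1 := by
      simp only [hg_def]
      rw [show N - (N - ε) = ε by ring, div_self hε.ne']
      norm_num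
    have hf_ne : f ≠ 0 := by
      intro h
      have h1 : ‖g N‖ ≤ ‖f‖ := norm_apply_le_norm_cfc g y
        (CStarAlgebra.norm_mem_spectrum_of_nonneg hy_nonneg) hg_cont.continuousOn hysa
      rw [h, norm_zero, hgN] at h1
      norm_num at h1
    set δ := (ρ (star f * f)).re with hδ_def
    have hδpos : 0 < δ := by
      rcases lt_or_eq_of_le (isState_re_nonneg ρ hρ f) with h | h
      · exact h
      · exfalso
        apply hf_ne
        apply hfaith
        have him : (ρ (star f * f)).im = 0 := by
          simpa using ((Complex.le_def.mp (hρ.nonneg f)).2).symm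
        exact Complex.ext (by simpa using h.symm) (by simpa using him)
    have hlow : ∀ p : ℕ, (N - ε) ^ p * δ ≤ (ρ (y ^ p)).re := by
      intro p
      have h1 : cfc (fun t => ((N - ε) ^ p) • (g t * g t)) y ≤ cfc (fun t : ℝ => t ^ p) y := by
        apply cfc_mono
        · intro t ht
          have ht0 : 0 ≤ t := spectrum_nonneg_of_nonneg hy_nonneg ht
          have htN : t ≤ N := by
            calc t ≤ |t| := le_abs_self t
              _ ≤ N := spectrum.norm_le_norm_of_mem ht
          have hg0 : 0 ≤ g t := le_max_left _ _
          have hg1 : g t ≤ 1 := max_le (by norm_num) (min_le_left _ _)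
          by_cases hcase : t ≤ N - ε
          · have hgt : g t = 0 := by
              have hle : min 1 ((t - (N - ε)) / ε) ≤ 0 :=
                le_trans (min_le_right _ _)
                  (div_nonpos_of_nonpos_of_nonneg (by linarith) hε.le)
              simp only [hg_def]
              exact max_eq_left hle
            simp only [hgt, smul_eq_mul, mul_zero, zero_mul]
            exact pow_nonneg ht0 p
          · push_neg at hcase
            have h2 : (N - ε) ^ p ≤ t ^ p := pow_le_pow_left₀ (by linarith) hcase.le p
            have h3 : g t * g t ≤ 1 := mul_le_one₀ hg1 hg0 hg1
            have h4 : 0 ≤ (N - ε) ^ p := pow_nonneg (by linarith) p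
            simp only [smul_eq_mul]
            nlinarith
        · exact ((continuous_const (y := (N - ε) ^ p)).smul (hg_cont.mul hg_cont)).continuousOn
        · exact (continuous_pow p).continuousOn
      have hle : ((N - ε) ^ p) • (f * f) ≤ y ^ p := by
        calc ((N - ε) ^ p) • (f * f)
            = cfc (fun t => ((N - ε) ^ p) • (g t * g t)) y := by
              rw [cfc_smul _ (fun t => g t * g t) y ((hg_cont.mul hg_cont).continuousOn),
                cfc_mul g g y hg_cont.continuousOn hg_cont.continuousOn]
          _ ≤ cfc (fun t : ℝ => t ^ p) y := h1
          _ = y ^ p := cfc_pow_id y p hysa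
      have h5 := rho_re_mono ρ hρ hle
      rw [rho_smul_re] at h5
      rw [hfsa.star_eq] at hδ_def
      rw [hδ_def]
      exact h5
    have hupper : ∀ m : ℕ, (ρ (y ^ (2 * (m + 1)))).re ≤ (C ^ m * K ^ (m + 1)) ^ 2 := by
      intro m
      have h2 : (norm2 ρ (y ^ (m + 1))) ^ 2 = (ρ (y ^ (2 * (m + 1)))).re := by
        rw [norm2_sq ρ hρ]
        congr 2
        rw [(hysa.pow (m + 1)).star_eq, ← pow_add]
        ring_nf
      rw [← h2]
      have h3 := hpow m
      have h0 := norm2_nonneg' ρ (y ^ (m + 1))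
      have h4 : 0 ≤ C ^ m * K ^ (m + 1) := by positivity
      nlinarith
    by_contra hcon
    push_neg at hcon
    set M := N - ε with hM
    have hM0 : 0 < M := by simp only [hM]; linarith
    have hCK0 : 0 ≤ C * K := by positivity
    set q := (C * K) / M with hq
    have hq0 : 0 ≤ q := div_nonneg hCK0 hM0.le
    have hq1 : q < 1 := (div_lt_one hM0).mpr hcon
    have hbound : ∀ m : ℕ, δ ≤ q ^ m / C ^ 2 := by
      intro m
      have h1 : M ^ (2 * (m + 1)) * δ ≤ (C ^ m * K ^ (m + 1)) ^ 2 :=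
        (hlow (2 * (m + 1))).trans (hupper m)
      have hMp : 0 < M ^ (2 * (m + 1)) := pow_pos hM0 _
      have h2 : δ ≤ (C ^ m * K ^ (m + 1)) ^ 2 / M ^ (2 * (m + 1)) := by
        rw [le_div_iff₀ hMp, mul_comm]
        exact h1
      have h3 : (C ^ m * K ^ (m + 1)) ^ 2 / M ^ (2 * (m + 1)) = q ^ (2 * (m + 1)) / C ^ 2 := by
        rw [hq, div_pow, div_div]
        rw [div_eq_div_iff hMp.ne' (by positivity)]
        ring
      have h4 : q ^ (2 * (m + 1)) ≤ q ^ m := pow_le_pow_of_le_one hq0 hq1.le (by omega)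
      calc δ ≤ (C ^ m * K ^ (m + 1)) ^ 2 / M ^ (2 * (m + 1)) := h2
        _ = q ^ (2 * (m + 1)) / C ^ 2 := h3
        _ ≤ q ^ m / C ^ 2 := by
            apply div_le_div_of_nonneg_right h4 (by positivity) |>.trans_eq rfl
    have htend : Filter.Tendsto (fun m : ℕ => q ^ m / C ^ 2) Filter.atTop (nhds 0) := by
      simpa using (tendsto_pow_atTop_nhds_zero_of_lt_one hq0 hq1).div_const (C ^ 2)
    have hfin : δ ≤ 0 := ge_of_tendsto' htend hbound
    linarith
  by_contra hcon
  push_neg at hcon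
  have hCK0 : 0 ≤ C * K := by positivity
  have hε : 0 < (N - C * K) / 2 := by linarith
  have hεN : (N - C * K) / 2 < N := by linarith
  have h := hmain ((N - C * K) / 2) hε hεN
  linarith

end Aux

/-- For a unital C*-probability space `(A, ρ)` with `ρ` faithful and a
filtration `(V n)`, the rapid decay property is equivalent to the bilinear estimate
`‖a·b‖₂ ≤ c (n+1)^α ‖a‖₂ ‖b‖₂` for `a ∈ V n` and `b ∈ ⋃ k, V k`. -/
theorem rapidDecay_iff_bilinear
    {A : Type*} [NormedRing A] [StarRing A] [CStarRing A] [CompleteSpace A]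
    [NormedAlgebra ℂ A] [StarModule ℂ A]
    (ρ : A →ₗ[ℂ] ℂ) (hρ : IsState ρ)
    (hfaith : ∀ a : A, ρ (star a * a) = 0 → a = 0)
    (V : ℕ → Submodule ℂ A) (hV : IsAlgFiltration V) :
    HasRapidDecay ρ V ↔
      ∃ c > (0 : ℝ), ∃ α > (0 : ℝ), ∀ n : ℕ, ∀ a ∈ V n, ∀ b ∈ ⋃ k : ℕ, (V k : Set A),
        norm2 ρ (a * b) ≤ c * ((n : ℝ) + 1) ^ α * norm2 ρ a * norm2 ρ b := by
  constructor
  · rintro ⟨c, hc, α, hα, hrd⟩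
    refine ⟨c, hc, α, hα, fun n a ha b _ => ?_⟩
    calc norm2 ρ (a * b) ≤ ‖a‖ * norm2 ρ b := norm2_mul_le ρ hρ a b
      _ ≤ (c * ((n : ℝ) + 1) ^ α * norm2 ρ a) * norm2 ρ b :=
          mul_le_mul_of_nonneg_right (hrd n a ha) (norm2_nonneg' ρ b)
      _ = c * ((n : ℝ) + 1) ^ α * norm2 ρ a * norm2 ρ b := by ring
  · rintro ⟨c, hc, α, hα, hbil⟩
    refine ⟨c * 2 ^ α, by positivity, α, hα, fun n a ha => ?_⟩
    by_cases ha0 : a = 0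
    · simp [ha0, norm2_zero]
    set y := star a * a with hydef
    have hy_mem : y ∈ V (n + n) := hV.mul_mem n n (star a) (hV.star_mem n a ha) a ha
    have hyp_mem : ∀ m : ℕ, ∃ k, y ^ m ∈ V k := by
      intro m
      induction m with
      | zero =>
        exact ⟨0, by rw [pow_zero, hV.zero_eq]; exact Submodule.mem_span_singleton_self 1⟩
      | succ m ih =>
        obtain ⟨k, hk⟩ := ih
        exact ⟨(n + n) + k, by rw [pow_succ']; exact hV.mul_mem _ _ y hy_mem _ hk⟩
    set C := c * (((n + n : ℕ) : ℝ) + 1) ^ α with hC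
    have hCpos : 0 < C := by positivity
    have hpow : ∀ m : ℕ, norm2 ρ (y ^ (m + 1)) ≤ C ^ m * norm2 ρ y ^ (m + 1) := by
      intro m
      induction m with
      | zero => simp
      | succ m ih =>
        obtain ⟨k, hk⟩ := hyp_mem (m + 1)
        have hb : y ^ (m + 1) ∈ ⋃ k : ℕ, (V k : Set A) := Set.mem_iUnion.mpr ⟨k, hk⟩
        have h1 := hbil (n + n) y hy_mem (y ^ (m + 1)) hb
        rw [← pow_succ'] at h1
        calc norm2 ρ (y ^ (m + 1 + 1)) ≤ C * norm2 ρ y * norm2 ρ (y ^ (m + 1)) := by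
              rw [hC]; exact le_of_le_of_eq h1 (by ring)
          _ ≤ C * norm2 ρ y * (C ^ m * norm2 ρ y ^ (m + 1)) :=
              mul_le_mul_of_nonneg_left ih (mul_nonneg hCpos.le (norm2_nonneg' ρ y))
          _ = C ^ (m + 1) * norm2 ρ y ^ (m + 1 + 1) := by ring
    have hkey := norm_star_mul_self_le_of_pow ρ hρ hfaith a hCpos hpow
    have hLa : norm2 ρ y ≤ ‖a‖ * norm2 ρ a := by
      have h := norm2_mul_le ρ hρ (star a) a
      rwa [norm_star] at h
    have h2 : ‖a‖ * ‖a‖ ≤ C * (‖a‖ * norm2 ρ a) := by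
      calc ‖a‖ * ‖a‖ = ‖y‖ := (CStarRing.norm_star_mul_self).symm
        _ ≤ C * norm2 ρ y := hkey
        _ ≤ C * (‖a‖ * norm2 ρ a) := mul_le_mul_of_nonneg_left hLa hCpos.le
    have ha_pos : 0 < ‖a‖ := norm_pos_iff.mpr ha0
    have h3 : ‖a‖ ≤ C * norm2 ρ a := by nlinarith
    have h4 : C ≤ c * 2 ^ α * ((n : ℝ) + 1) ^ α := by
      rw [hC]
      have hcast : ((n + n : ℕ) : ℝ) + 1 ≤ 2 * ((n : ℝ) + 1) := by push_cast; linarith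
      calc c * (((n + n : ℕ) : ℝ) + 1) ^ α ≤ c * (2 * ((n : ℝ) + 1)) ^ α := by
            apply mul_le_mul_of_nonneg_left _ hc.le
            exact Real.rpow_le_rpow (by positivity) hcast hα.le
        _ = c * (2 ^ α * ((n : ℝ) + 1) ^ α) := by
            rw [Real.mul_rpow (by norm_num) (by positivity)]
        _ = c * 2 ^ α * ((n : ℝ) + 1) ^ α := by ring
    calc ‖a‖ ≤ C * norm2 ρ a := h3
      _ ≤ (c * 2 ^ α * ((n : ℝ) + 1) ^ α) * norm2 ρ a :=
          mul_le_mul_of_nonneg_right h4 (norm2_nonneg' ρ a)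
end

section
/- Let A be a unital C*-algebra and ρ a faithful state on A. Suppose there is an increasing sequence (B_m)_{m≥1} of finite-dimensional subalgebras of A, each containing the unit and closed under adjoints, whose union is norm-dense in A (i.e. A is a unital AF algebra). Then A admits a filtration (V_n)_{n≥0} such that ‖a‖ ≤ (n+1) ‖a‖₂ for every n and every a ∈ V_n; in particular (A, ρ) has a filtration with the rapid decay property. -/
open scoped ComplexOrder

section Defs

variable {A : Type*} [NormedRing A] [StarRing A] [Module ℂ A]

/-- A filtration of a unital complex `*`-algebra: an increasing sequence of subspaces with
`V 0 = ℂ·1`, stable under adjoints, submultiplicative, and with dense union. -/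
structure IsStarFiltration (V : ℕ → Submodule ℂ A) : Prop where
  zero_eq : V 0 = Submodule.span ℂ ({1} : Set A)
  mono : Monotone V
  star_mem : ∀ n : ℕ, ∀ a ∈ V n, star a ∈ V n
  mul_mem : ∀ m n : ℕ, ∀ a ∈ V m, ∀ b ∈ V n, a * b ∈ V (m + n)
  dense : Dense (⋃ n : ℕ, (V n : Set A))

end Defs

section Aux

variable {A : Type*} [NormedRing A] [StarRing A] [CStarRing A] [CompleteSpace A]
    [NormedAlgebra ℂ A] [StarModule ℂ A]

omit [CStarRing A] [CompleteSpace A] in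
lemma norm2_smul' (ρ : A →ₗ[ℂ] ℂ) (c : ℂ) (a : A) :
    norm2 ρ (c • a) = ‖c‖ * norm2 ρ a := by
  unfold norm2
  rw [show star (c • a) * (c • a) = (Complex.normSq c : ℂ) • (star a * a) by
        rw [star_smul, smul_mul_smul_comm, Complex.normSq_eq_conj_mul_self]; rfl,
    map_smul, smul_eq_mul, Complex.re_ofReal_mul,
    Real.sqrt_mul (Complex.normSq_nonneg c), Complex.norm_def]

omit [CompleteSpace A] in
lemma fd_bound' (ρ : A →ₗ[ℂ] ℂ) (hpos : ∀ a : A, 0 ≤ ρ (star a * a))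
    (hfaith : ∀ a : A, ρ (star a * a) = 0 → a = 0)
    (S : StarSubalgebra ℂ A) (hS : FiniteDimensional ℂ S) :
    ∃ C : ℝ, 0 < C ∧ ∀ a ∈ S, ‖a‖ ≤ C * norm2 ρ a := by
  haveI : FiniteDimensional ℂ (Subalgebra.toSubmodule S.toSubalgebra) := hS
  set W : Submodule ℂ A := Subalgebra.toSubmodule S.toSubalgebra with hW
  have hmemW : ∀ a : W, star (a : A) * (a : A) ∈ W := fun a =>
    show star (a : A) * (a : A) ∈ S from mul_mem (star_mem a.2) a.2
  have hgc : Continuous fun a : W => norm2 ρ (a : A) := by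
    have h1 : Continuous fun a : W => (⟨star (a : A) * a, hmemW a⟩ : W) :=
      Continuous.subtype_mk
        ((continuous_star.comp continuous_subtype_val).mul continuous_subtype_val) _
    have h2 : Continuous fun a : W => ρ (star (a : A) * a) := by
      have := ((ρ.comp W.subtype).continuous_of_finiteDimensional).comp h1
      exact this
    exact Real.continuous_sqrt.comp (Complex.continuous_re.comp h2)
  have hposg : ∀ a : W, ‖a‖ = 1 → 0 < norm2 ρ (a : A) := by
    intro a ha
    have hne : (a : A) ≠ 0 := by
      intro h0
      rw [show ‖a‖ = ‖(a : A)‖ from rfl, h0, norm_zero] at ha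
      exact one_ne_zero ha.symm
    have h1 := hpos (a : A)
    have h2 : ρ (star (a : A) * a) ≠ 0 := fun h => hne (hfaith _ h)
    rw [Complex.le_def] at h1
    apply Real.sqrt_pos.mpr
    rcases lt_or_eq_of_le h1.1 with h | h
    · exact h
    · exact absurd (Complex.ext h.symm h1.2.symm) (by simpa using h2)
  have key : ∃ ε : ℝ, 0 < ε ∧ ∀ a : W, ‖a‖ = 1 → ε ≤ norm2 ρ (a : A) := by
    by_cases hne : (Metric.sphere (0 : W) 1).Nonempty
    · obtain ⟨x, hx, hmin⟩ := (isCompact_sphere (0 : W) 1).exists_isMinOn hne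
        hgc.continuousOn
      refine ⟨norm2 ρ (x : A), hposg x (by simpa using hx), fun a ha => ?_⟩
      exact hmin (by simpa using ha)
    · exact ⟨1, one_pos, fun a ha => absurd ⟨a, by simpa using ha⟩ hne⟩
  obtain ⟨ε, hε, hkey⟩ := key
  refine ⟨ε⁻¹, inv_pos.mpr hε, fun a haS => ?_⟩
  by_cases h0 : a = 0
  · simp [h0, norm2, Real.sqrt_nonneg]
  · have hna : 0 < ‖a‖ := norm_pos_iff.mpr h0
    set c : ℂ := ((‖a‖⁻¹ : ℝ) : ℂ) with hc
    have hcn : ‖c‖ = ‖a‖⁻¹ := by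
      rw [hc, Complex.norm_real, Real.norm_eq_abs, abs_of_pos (inv_pos.mpr hna)]
    set b : W := ⟨c • a, Submodule.smul_mem _ _ haS⟩ with hb
    have hbn : ‖b‖ = 1 := by
      rw [show ‖b‖ = ‖c • a‖ from rfl, norm_smul, hcn, inv_mul_cancel₀ (ne_of_gt hna)]
    have := hkey b hbn
    rw [show ((b : A)) = c • a from rfl, norm2_smul', hcn] at this
    have h3 : ‖a‖⁻¹ * norm2 ρ a * ‖a‖ = norm2 ρ a := by field_simp
    have h2 : ε * ‖a‖ ≤ norm2 ρ a :=
      le_trans (mul_le_mul_of_nonneg_right this hna.le) (le_of_eq h3)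
    calc ‖a‖ = ε⁻¹ * (ε * ‖a‖) := by field_simp
      _ ≤ ε⁻¹ * norm2 ρ a :=
          mul_le_mul_of_nonneg_left h2 (inv_pos.mpr hε).le

end Aux

/-- A unital AF C*-algebra `A` (i.e. admitting an increasing sequence of
finite-dimensional unital star-subalgebras with dense union) with a faithful state `ρ` admits
a filtration `(V n)` with `‖a‖ ≤ (n+1) ‖a‖₂` for all `a ∈ V n`; in particular `(A, ρ)` has a
filtration with the rapid decay property. -/
theorem AF_rapidDecay
    {A : Type*} [NormedRing A] [StarRing A] [CStarRing A] [CompleteSpace A]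
    [NormedAlgebra ℂ A] [StarModule ℂ A]
    (ρ : A →ₗ[ℂ] ℂ) (hρ : IsState ρ)
    (hfaith : ∀ a : A, ρ (star a * a) = 0 → a = 0)
    (B : ℕ → StarSubalgebra ℂ A) (hmono : Monotone B)
    (hfd : ∀ m : ℕ, FiniteDimensional ℂ (B m))
    (hdense : Dense (⋃ m : ℕ, (B m : Set A))) :
    ∃ V : ℕ → Submodule ℂ A, IsStarFiltration V ∧
      ∀ n : ℕ, ∀ a ∈ V n, ‖a‖ ≤ ((n : ℝ) + 1) * norm2 ρ a := by
  classical
  have hC : ∀ m : ℕ, ∃ C : ℝ, 0 < C ∧ ∀ a ∈ B m, ‖a‖ ≤ C * norm2 ρ a :=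
    fun m => fd_bound' ρ hρ.nonneg hfaith (B m) (hfd m)
  choose C hCpos hCb using hC
  set N : ℕ → ℕ := fun m => ⌈C m⌉₊ with hN
  set T : ℕ → Set ℕ := fun n => {m | m ≤ n ∧ ∀ i ≤ m, N i ≤ n + 1} with hT
  have hTb : ∀ n, BddAbove (T n) := fun n => ⟨n, fun m hm => hm.1⟩
  have hTmono : ∀ {n n' : ℕ}, n ≤ n' → T n ⊆ T n' := by
    intro n n' h m hm
    exact ⟨hm.1.trans h, fun i hi => (hm.2 i hi).trans (by omega)⟩
  set V : ℕ → Submodule ℂ A := fun n =>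
    if _ : (T n).Nonempty ∧ 0 < n then
      Subalgebra.toSubmodule (B (sSup (T n))).toSubalgebra
    else Submodule.span ℂ ({1} : Set A) with hV
  have hVcases : ∀ n, (V n = Submodule.span ℂ ({1} : Set A)) ∨
      ((T n).Nonempty ∧ 0 < n ∧
        V n = Subalgebra.toSubmodule (B (sSup (T n))).toSubalgebra) := by
    intro n
    by_cases h : (T n).Nonempty ∧ 0 < n
    · exact Or.inr ⟨h.1, h.2, dif_pos h⟩
    · exact Or.inl (dif_neg h)
  have hone : ∀ k, Submodule.span ℂ ({1} : Set A) ≤ V k := by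
    intro k
    rcases hVcases k with h | ⟨-, -, h⟩
    · rw [h]
    · rw [h, Submodule.span_le, Set.singleton_subset_iff]
      exact SetLike.mem_coe.mpr (show (1 : A) ∈ B _ from one_mem _)
  have hVmono : Monotone V := by
    intro n n' h
    rcases hVcases n with h1 | ⟨hne, hpos, h1⟩
    · rw [h1]; exact hone n'
    · have hn' : (T n').Nonempty ∧ 0 < n' := ⟨hne.mono (hTmono h), lt_of_lt_of_le hpos h⟩
      have h2 : V n' = Subalgebra.toSubmodule (B (sSup (T n'))).toSubalgebra := dif_pos hn'
      rw [h1, h2]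
      intro x hx
      exact hmono (csSup_le_csSup (hTb n') hne (hTmono h)) hx
  refine ⟨V, ⟨?_, hVmono, ?_, ?_, ?_⟩, ?_⟩
  · exact dif_neg (by rintro ⟨-, h⟩; exact absurd h (lt_irrefl 0))
  · -- star_mem
    intro n a ha
    rcases hVcases n with h1 | ⟨-, -, h1⟩
    · rw [h1] at ha ⊢
      obtain ⟨z, rfl⟩ := Submodule.mem_span_singleton.mp ha
      rw [star_smul, star_one]
      exact Submodule.smul_mem _ _ (Submodule.mem_span_singleton_self 1)
    · rw [h1] at ha ⊢
      exact show star a ∈ B _ from star_mem (show a ∈ B _ from ha)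
  · -- mul_mem
    intro m n a ha b hb
    rcases hVcases m with h1 | ⟨hne, hpos, h1⟩
    · rw [h1] at ha
      obtain ⟨z, rfl⟩ := Submodule.mem_span_singleton.mp ha
      rw [smul_mul_assoc, one_mul]
      exact hVmono (Nat.le_add_left n m) (Submodule.smul_mem _ _ hb)
    · rcases hVcases n with h2 | ⟨hne2, hpos2, h2⟩
      · rw [h2] at hb
        obtain ⟨z, rfl⟩ := Submodule.mem_span_singleton.mp hb
        rw [mul_smul_comm, mul_one]
        exact hVmono (Nat.le_add_right m n) (Submodule.smul_mem _ _ ha)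
      · have hnemn : (T (m + n)).Nonempty := hne.mono (hTmono (Nat.le_add_right m n))
        have h3 : V (m + n) = Subalgebra.toSubmodule (B (sSup (T (m + n)))).toSubalgebra :=
          dif_pos ⟨hnemn, by omega⟩
        rw [h1] at ha; rw [h2] at hb; rw [h3]
        have hka : a ∈ B (sSup (T (m + n))) :=
          hmono (csSup_le_csSup (hTb _) hne (hTmono (Nat.le_add_right m n))) ha
        have hkb : b ∈ B (sSup (T (m + n))) :=
          hmono (csSup_le_csSup (hTb _) hne2 (hTmono (Nat.le_add_left n m))) hb
        exact show a * b ∈ B _ from mul_mem hka hkb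
  · -- dense
    refine hdense.mono ?_
    intro x hx
    obtain ⟨s, ⟨m, rfl⟩, hm⟩ := hx
    set n := m + 1 + (Finset.range (m + 1)).sup N with hn
    have hmem : m ∈ T n := by
      refine ⟨by omega, fun i hi => ?_⟩
      have : N i ≤ (Finset.range (m + 1)).sup N := Finset.le_sup (Finset.mem_range.mpr (by omega))
      omega
    have h1 : V n = Subalgebra.toSubmodule (B (sSup (T n))).toSubalgebra :=
      dif_pos ⟨⟨m, hmem⟩, by omega⟩
    refine Set.mem_iUnion.mpr ⟨n, ?_⟩
    rw [h1]
    exact SetLike.mem_coe.mpr (hmono (le_csSup (hTb n) hmem) hm)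
  · -- the bound
    intro n a ha
    have h2nn : 0 ≤ norm2 ρ a := Real.sqrt_nonneg _
    have hn1 : (1 : ℝ) ≤ (n : ℝ) + 1 := le_add_of_nonneg_left (Nat.cast_nonneg n)
    rcases hVcases n with h1 | ⟨hne, hpos, h1⟩
    · rw [h1] at ha
      obtain ⟨z, rfl⟩ := Submodule.mem_span_singleton.mp ha
      have hnorm2 : norm2 ρ (z • (1 : A)) = ‖z‖ := by
        rw [norm2_smul']
        have h5 : norm2 ρ (1 : A) = 1 := by
          unfold norm2
          rw [star_one, one_mul, hρ.map_one, Complex.one_re, Real.sqrt_one]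
        rw [h5, mul_one]
      have hnorm : ‖z • (1 : A)‖ ≤ ‖z‖ := by
        rcases subsingleton_or_nontrivial A with hs | hs
        · rw [Subsingleton.elim (z • (1 : A)) 0, norm_zero]; positivity
        · rw [norm_smul, norm_one, mul_one]
      calc ‖z • (1 : A)‖ ≤ ‖z‖ := hnorm
        _ = 1 * norm2 ρ (z • (1 : A)) := by rw [hnorm2, one_mul]
        _ ≤ ((n : ℝ) + 1) * norm2 ρ (z • (1 : A)) :=
            mul_le_mul_of_nonneg_right hn1 (Real.sqrt_nonneg _)
    · rw [h1] at ha
      have hk : sSup (T n) ∈ T n := Nat.sSup_mem hne (hTb n)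
      have hb := hCb (sSup (T n)) a ha
      have hle : C (sSup (T n)) ≤ (n : ℝ) + 1 := by
        have h4 : C (sSup (T n)) ≤ (N (sSup (T n)) : ℝ) := Nat.le_ceil _
        have h5 : (N (sSup (T n)) : ℝ) ≤ (n : ℝ) + 1 := by
          exact_mod_cast hk.2 _ le_rfl
        linarith
      calc ‖a‖ ≤ C (sSup (T n)) * norm2 ρ a := hb
        _ ≤ ((n : ℝ) + 1) * norm2 ρ a := mul_le_mul_of_nonneg_right hle h2nn
end
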